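/- For every integer r ≥ 1, the set of integers whose far-difference representation has largest-index summand +F_r is exactly the interval of integers (S_{r−1}, S_r]; in particular N(+F_r) = S_r − S_{r−1}. Moreover, by the symmetry m ↔ −m, N(−F_r) = N(+F_r). -/

import Mathlib

/-- The Fibonacci numbers indexed as `F 1 = 1, F 2 = 2, F 3 = 3, F 4 = 5, …`,
so `F (n+1) = F n + F (n-1)`. -/
def F (n : ℕ) : ℕ := Nat.fib (n + 1)

/-- `(P, N)` encodes a far-difference representation: `P` is the set of indices of
positive summands and `N` the set of indices of negative summands; all indices are `≥ 1`,
same-sign indices differ by at least `4`, and opposite-sign indices differ by at least `3`. -/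
def IsFarDiff (P N : Finset ℕ) : Prop :=
  (∀ i ∈ P, 1 ≤ i) ∧ (∀ i ∈ N, 1 ≤ i) ∧
  (∀ i ∈ P, ∀ j ∈ P, i < j → 4 ≤ j - i) ∧
  (∀ i ∈ N, ∀ j ∈ N, i < j → 4 ≤ j - i) ∧
  (∀ i ∈ P, ∀ j ∈ N, (i < j → 3 ≤ j - i) ∧ (j < i → 3 ≤ i - j) ∧ i ≠ j)

/-- The integer represented by the far-difference data `(P, N)`:
`∑_{i ∈ P} F i − ∑_{i ∈ N} F i`. -/
def fdVal (P N : Finset ℕ) : ℤ :=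
  (∑ i ∈ P, (F i : ℤ)) - ∑ i ∈ N, (F i : ℤ)

/-- `S n = F n + F (n-4) + F (n-8) + ⋯`, the sum over positive indices, with `S 0 = 0`. -/
def S : ℕ → ℕ
  | 0 => 0
  | n + 1 => F (n + 1) + S (n + 1 - 4)

/-- The summand `ε F i` occurs in the representation `(P, N)`:
`i ∈ P` if `ε = 1`, and `i ∈ N` if `ε = -1`. -/
def SignedMem (ε : ℤ) (i : ℕ) (P N : Finset ℕ) : Prop :=
  (ε = 1 ∧ i ∈ P) ∨ (ε = -1 ∧ i ∈ N)

/-- The set of (nonzero) integers whose far-difference representation has largest-index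
summand `ε' F j`. -/
def fdTopSet (ε' : ℤ) (j : ℕ) : Set ℤ :=
  {m : ℤ | ∃ P N : Finset ℕ, IsFarDiff P N ∧ fdVal P N = m ∧
    SignedMem ε' j P N ∧ ∀ r ∈ P ∪ N, r ≤ j}

/-- `N(ε' F j)`: the number of nonzero integers whose far-difference representation has
largest-index summand `ε' F j`. -/
noncomputable def fdTopCount (ε' : ℤ) (j : ℕ) : ℕ :=
  (fdTopSet ε' j).ncard

/-!
Everything rests on two identities: `S r = F r + S (r - 4)` and `F r = S (r - 1) + S (r - 3) + 1`
(for `r ≥ 1`; the second by a two-step Fibonacci induction). In a representation with top summand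
`+F r` the positive part is a 4-separated sum bounded by `S r` and the negative part one bounded by
`S (r - 3)`, which puts the value in `(S (r - 1), S r]`. Conversely, for `m` in that interval the
remainder `m - F r` lies in `[-S (r - 3), S (r - 4)]`; by strong induction it has a representation
whose leading summand is small enough for `+F r` to be put in front of it.
-/

open Finset Pointwise

lemma F_add_two (n : ℕ) : F (n + 2) = F (n + 1) + F n :=
  Nat.fib_add_two.trans (add_comm _ _)

lemma S_add_four (n : ℕ) : S (n + 4) = F (n + 4) + S n := by
  rw [S]; rfl

lemma S_eq_F_add_S {r : ℕ} (hr : 1 ≤ r) : S r = F r + S (r - 4) := by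
  obtain ⟨n, rfl⟩ := Nat.exists_eq_add_of_le' hr
  rw [S]

lemma F_add_three (n : ℕ) : F (n + 3) = S (n + 2) + S n + 1 := by
  induction n using Nat.twoStepInduction with
  | zero => simp [S, F, Nat.fib_add_two]
  | one => simp [S, F, Nat.fib_add_two]
  | more n ih _ =>
    rw [show n + 2 + 3 = (n + 3) + 2 by ring, F_add_two, show n + 3 + 1 = n + 4 by ring,
      show n + 2 + 2 = n + 4 by ring, S_add_four, ih]
    ring

lemma F_eq_S_add_S {r : ℕ} (hr : 1 ≤ r) : F r = S (r - 1) + S (r - 3) + 1 := by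
  match r, hr with
  | 1, _ => simp [S, F]
  | 2, _ => simp [S, F, Nat.fib_add_two]
  | n + 3, _ => simpa using F_add_three n

lemma S_strictMono : StrictMono S :=
  strictMono_nat_of_lt_succ fun n => by
    have hS := S_eq_F_add_S (r := n + 1) (by omega)
    have hF := F_eq_S_add_S (r := n + 1) (by omega)
    simp only [Nat.add_sub_cancel] at hF
    omega

lemma sum_F_le_S {P : Finset ℕ} (hpos : ∀ i ∈ P, 1 ≤ i)
    (hsep : ∀ i ∈ P, ∀ k ∈ P, i < k → 4 ≤ k - i) {j : ℕ} (hj : ∀ i ∈ P, i ≤ j) :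
    ∑ i ∈ P, (F i : ℤ) ≤ S j := by
  induction P using Finset.induction_on_max generalizing j with
  | empty => simp
  | insert a P hlt ih =>
    have ha : a ∈ insert a P := mem_insert_self a P
    have hsub : P ⊆ insert a P := subset_insert a P
    have hP : ∑ i ∈ P, (F i : ℤ) ≤ S (a - 4) :=
      ih (fun i hi => hpos i (hsub hi)) (fun i hi k hk => hsep i (hsub hi) k (hsub hk))
        fun i hi => by have := hsep i (hsub hi) a ha (hlt i hi); omega
    have hSa : (S a : ℤ) = F a + S (a - 4) := by exact_mod_cast S_eq_F_add_S (hpos a ha)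
    have hSj : (S a : ℤ) ≤ S j := by exact_mod_cast S_strictMono.monotone (hj a ha)
    rw [sum_insert fun h => (hlt a h).false]
    omega

lemma exists_lt_le_succ_of_lt_of_le {f : ℕ → ℤ} {m : ℤ} {b : ℕ} (h0 : f 0 < m)
    (hb : m ≤ f b) :
    ∃ k < b, f k < m ∧ m ≤ f (k + 1) := by
  induction b with
  | zero => omega
  | succ b ih =>
    by_cases hm : m ≤ f b
    · obtain ⟨k, hk, hkm⟩ := ih hm
      exact ⟨k, by omega, hkm⟩
    · exact ⟨b, by omega, by omega, hb⟩

namespace IsFarDiff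

variable {P N : Finset ℕ}

lemma swap (h : IsFarDiff P N) : IsFarDiff N P := by
  obtain ⟨h1, h2, h3, h4, h5⟩ := h
  exact ⟨h2, h1, h4, h3, fun i hi j hj =>
    ⟨(h5 j hj i hi).2.1, (h5 j hj i hi).1, fun he => (h5 j hj i hi).2.2 he.symm⟩⟩

lemma insert_left (h : IsFarDiff P N) {r : ℕ} (hr : 1 ≤ r) (hP : ∀ i ∈ P, i + 4 ≤ r)
    (hN : ∀ i ∈ N, i + 3 ≤ r) : IsFarDiff (insert r P) N := by
  obtain ⟨h1, h2, h3, h4, h5⟩ := h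
  refine ⟨?_, h2, ?_, h4, ?_⟩
  · simpa [hr] using h1
  · simp only [mem_insert]
    rintro i (rfl | hi) j (rfl | hj) hij
    · omega
    · have := hP j hj; omega
    · have := hP i hi; omega
    · exact h3 i hi j hj hij
  · simp only [mem_insert]
    rintro i (rfl | hi) j hj
    · have := hN j hj; omega
    · exact h5 i hi j hj

lemma add_three_le_of_mem_right (h : IsFarDiff P N) {k : ℕ} (hk : k ∈ P)
    (hle : ∀ i ∈ P ∪ N, i ≤ k) {i : ℕ} (hi : i ∈ N) : i + 3 ≤ k := by
  have := h.2.2.2.2 k hk i hi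
  have := hle i (mem_union_right P hi)
  omega

end IsFarDiff

lemma fdVal_swap (P N : Finset ℕ) : fdVal N P = -fdVal P N := by
  simp [fdVal]

lemma fdVal_insert_left {P : Finset ℕ} (N : Finset ℕ) {r : ℕ} (hr : r ∉ P) :
    fdVal (insert r P) N = F r + fdVal P N := by
  simp only [fdVal, sum_insert hr]
  ring

lemma signedMem_neg_swap (ε : ℤ) (i : ℕ) (P N : Finset ℕ) :
    SignedMem (-ε) i N P ↔ SignedMem ε i P N := by
  simp only [SignedMem, neg_eq_iff_eq_neg]
  tauto

lemma neg_mem_fdTopSet {ε : ℤ} {r : ℕ} {m : ℤ} (h : m ∈ fdTopSet ε r) :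
    -m ∈ fdTopSet (-ε) r := by
  obtain ⟨P, N, hfd, rfl, hsm, hle⟩ := h
  exact ⟨N, P, hfd.swap, fdVal_swap P N, (signedMem_neg_swap ε r P N).2 hsm,
    fun i hi => hle i (union_comm N P ▸ hi)⟩

lemma fdTopSet_neg (ε : ℤ) (r : ℕ) : fdTopSet (-ε) r = -fdTopSet ε r :=
  Set.ext fun m => ⟨fun h => by simpa using neg_mem_fdTopSet h,
    fun h => by simpa using neg_mem_fdTopSet (Set.mem_neg.1 h)⟩

lemma mem_fdTopSet_one_iff {k : ℕ} {m : ℤ} :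
    m ∈ fdTopSet 1 k ↔ ∃ P N, IsFarDiff P N ∧ fdVal P N = m ∧ k ∈ P ∧
      (∀ i ∈ P, i ≤ k) ∧ ∀ i ∈ N, i + 3 ≤ k := by
  simp only [fdTopSet, SignedMem, Set.mem_ofPred_eq]
  constructor
  · rintro ⟨P, N, hfd, hval, (⟨-, hk⟩ | ⟨h, -⟩), hle⟩
    · exact ⟨P, N, hfd, hval, hk, fun i hi => hle i (mem_union_left N hi),
        fun i hi => hfd.add_three_le_of_mem_right hk hle hi⟩
    · norm_num at h
  · rintro ⟨P, N, hfd, hval, hk, hP, hN⟩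
    refine ⟨P, N, hfd, hval, Or.inl ⟨trivial, hk⟩, fun i hi => ?_⟩
    rcases mem_union.1 hi with hi | hi
    · exact hP i hi
    · have := hN i hi; omega

lemma F_add_fdVal_mem_fdTopSet_one {P N : Finset ℕ} (h : IsFarDiff P N) {r : ℕ} (hr : 1 ≤ r)
    (hP : ∀ i ∈ P, i + 4 ≤ r) (hN : ∀ i ∈ N, i + 3 ≤ r) :
    F r + fdVal P N ∈ fdTopSet 1 r := by
  have hrP : r ∉ P := fun hmem => by have := hP r hmem; omega
  refine mem_fdTopSet_one_iff.2 ⟨insert r P, N, h.insert_left hr hP hN,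
    fdVal_insert_left N hrP, mem_insert_self r P, ?_, hN⟩
  simp only [mem_insert, forall_eq_or_imp, le_refl, true_and]
  exact fun i hi => by have := hP i hi; omega

lemma fdTopSet_one_subset_Ioc {r : ℕ} (hr : 1 ≤ r) :
    fdTopSet 1 r ⊆ Set.Ioc (S (r - 1) : ℤ) (S r) := by
  rintro m hm
  obtain ⟨P, N, ⟨hP1, hN1, hPsep, hNsep, -⟩, rfl, hrP, hP, hN⟩ := mem_fdTopSet_one_iff.1 hm
  have hPS : ∑ i ∈ P, (F i : ℤ) ≤ S r := sum_F_le_S hP1 hPsep hP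
  have hNS : ∑ i ∈ N, (F i : ℤ) ≤ S (r - 3) :=
    sum_F_le_S hN1 hNsep fun i hi => by have := hN i hi; omega
  have hN0 : 0 ≤ ∑ i ∈ N, (F i : ℤ) := sum_nonneg fun i _ => by positivity
  have hFP : (F r : ℤ) ≤ ∑ i ∈ P, (F i : ℤ) :=
    single_le_sum (f := fun i => (F i : ℤ)) (fun i _ => by positivity) hrP
  have hF : (F r : ℤ) = S (r - 1) + S (r - 3) + 1 := by exact_mod_cast F_eq_S_add_S hr
  simp only [fdVal, Set.mem_Ioc]
  omega

lemma Ioc_subset_fdTopSet_one {r : ℕ} (hr : 1 ≤ r) :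
    Set.Ioc (S (r - 1) : ℤ) (S r) ⊆ fdTopSet 1 r := by
  induction r using Nat.strong_induction_on with
  | _ r ih =>
    rintro m ⟨hlow, hhigh⟩
    have smaller : ∀ b < r, ∀ t : ℤ, 0 < t → t ≤ S b →
        ∃ k, 1 ≤ k ∧ k ≤ b ∧ t ∈ fdTopSet 1 k := by
      intro b hb t ht htb
      obtain ⟨k, hkb, hk⟩ :=
        exists_lt_le_succ_of_lt_of_le (f := fun n => (S n : ℤ)) (by simpa [S] using ht) htb
      exact ⟨k + 1, by omega, hkb, ih (k + 1) (by omega) (by omega) (by simpa using hk)⟩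
    suffices ∃ P N, IsFarDiff P N ∧ fdVal P N = m - F r ∧
        (∀ i ∈ P, i + 4 ≤ r) ∧ ∀ i ∈ N, i + 3 ≤ r by
      obtain ⟨P, N, hfd, hval, hP, hN⟩ := this
      simpa [hval] using F_add_fdVal_mem_fdTopSet_one hfd hr hP hN
    have hS : (S r : ℤ) = F r + S (r - 4) := by exact_mod_cast S_eq_F_add_S hr
    have hF : (F r : ℤ) = S (r - 1) + S (r - 3) + 1 := by exact_mod_cast F_eq_S_add_S hr
    rcases lt_trichotomy (m - F r) 0 with hneg | hzero | hpos
    · obtain ⟨k, hk1, hk, hmem⟩ := smaller (r - 3) (by omega) (F r - m) (by omega) (by omega)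
      obtain ⟨P, N, hfd, hval, -, hP, hN⟩ := mem_fdTopSet_one_iff.1 hmem
      refine ⟨N, P, hfd.swap, by rw [fdVal_swap, hval]; ring, fun i hi => ?_, fun i hi => ?_⟩
      · have := hN i hi; omega
      · have := hP i hi; omega
    · exact ⟨∅, ∅, by simp [IsFarDiff], by simp [fdVal, hzero], by simp, by simp⟩
    · obtain ⟨k, hk1, hk, hmem⟩ := smaller (r - 4) (by omega) (m - F r) hpos (by omega)
      obtain ⟨P, N, hfd, hval, -, hP, hN⟩ := mem_fdTopSet_one_iff.1 hmem
      refine ⟨P, N, hfd, hval, fun i hi => ?_, fun i hi => ?_⟩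
      · have := hP i hi; omega
      · have := hN i hi; omega

/-- For every `r ≥ 1`, the integers whose far-difference representation
has largest-index summand `+F_r` are exactly those in `(S_{r−1}, S_r]`; in particular
`N(+F_r) = S_r − S_{r−1}`, and by the symmetry `m ↔ −m`, `N(−F_r) = N(+F_r)`. -/
theorem fardifference_top_interval (r : ℕ) (hr : 1 ≤ r) :
    fdTopSet 1 r = Set.Ioc ((S (r - 1) : ℤ)) ((S r : ℤ)) ∧
    (fdTopCount 1 r : ℤ) = (S r : ℤ) - (S (r - 1) : ℤ) ∧
    fdTopCount (-1) r = fdTopCount 1 r := by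
  have hset : fdTopSet 1 r = Set.Ioc (S (r - 1) : ℤ) (S r) :=
    (fdTopSet_one_subset_Ioc hr).antisymm (Ioc_subset_fdTopSet_one hr)
  have hmono : (S (r - 1) : ℤ) ≤ S r := by
    exact_mod_cast S_strictMono.monotone (Nat.sub_le r 1)
  refine ⟨hset, ?_, ?_⟩
  · rw [fdTopCount, hset, ← Finset.coe_Ioc, Set.ncard_coe_finset, Int.card_Ioc_of_le _ _ hmono]
  · rw [fdTopCount, fdTopCount, fdTopSet_neg, Set.ncard_neg]
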